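/- arXiv:math/0504579 — 3 statements merged into one kernel-verified Lean document; each statement's English description precedes it below -/
import Mathlib

section
/- For every integer t with t ≡ 3 (mod 6), setting x = f(t) and y = g(t) as in Hall's family, one has x^3 - y^2 = -(3t^6 + 14t^3 + 27)/108, and this value is an integer. -/
theorem hall_family_mordell (t x y : ℤ) (ht : t % 6 = 3)
    (hx : (x : ℚ) = ((t : ℚ) / 9) * ((t : ℚ)^9 + 6*(t : ℚ)^6 + 15*(t : ℚ)^3 + 12))
    (hy : (y : ℚ) = (t : ℚ)^15 / 27 + ((t : ℚ)^12 + 4*(t : ℚ)^9 + 8*(t : ℚ)^6) / 3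
        + (5*(t : ℚ)^3 + 1) / 2) :
    ((x : ℚ)^3 - (y : ℚ)^2 = -(3*(t : ℚ)^6 + 14*(t : ℚ)^3 + 27) / 108) ∧
    (∃ k : ℤ, (k : ℚ) = -(3*(t : ℚ)^6 + 14*(t : ℚ)^3 + 27) / 108) := by
  constructor
  · rw [hx, hy]; ring
  · obtain ⟨m, hm⟩ : ∃ m : ℤ, t = 6 * m + 3 := ⟨t / 6, by omega⟩
    refine ⟨-(24 + 264*m + 1257*m^2 + 3268*m^3 + 4860*m^4 + 3888*m^5 + 1296*m^6), ?_⟩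
    subst hm
    push_cast
    ring
end

section
/- There exists a positive constant Cₕ such that there are infinitely many pairs of positive integers (x, y) with x not a perfect square and 0 < |x^3 - y^2| < Cₕ · x^(3/5). -/
lemma hall_aux (u : ℕ) (hu : 1 ≤ u) :
    ∃ x y : ℕ, 2 * u ≤ x ∧ 0 < y ∧
      (¬ ∃ s : ℕ, s^2 = x) ∧
      0 < |(x : ℝ)^3 - (y : ℝ)^2| ∧
      |(x : ℝ)^3 - (y : ℝ)^2| < 297 * (x : ℝ) ^ ((3 : ℝ) / 5) := by
  refine ⟨(2*u+1)^10 + 6*(2*u+1)^7 + 15*(2*u+1)^4 + 12*(2*u+1),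
    (2*u+1)^15 + 9*(2*u+1)^12 + 36*(2*u+1)^9 + 72*(2*u+1)^6
      + 540*u^3 + 810*u^2 + 405*u + 81, ?_, by positivity, ?_, ?_, ?_⟩
  · -- 2u ≤ x
    have h1 : 12*(2*u+1) ≤ (2*u+1)^10 + 6*(2*u+1)^7 + 15*(2*u+1)^4 + 12*(2*u+1) :=
      Nat.le_add_left _ _
    omega
  · -- x ≡ 2 [MOD 4], so not a square
    rintro ⟨s, hs⟩
    have h4 : ((s : ZMod 4))^2 = 2 := by
      have h := congrArg (Nat.cast : ℕ → ZMod 4) hs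
      push_cast at h
      rw [h]
      have hv : ∀ v : ZMod 4,
          (2*v+1)^10 + 6*(2*v+1)^7 + 15*(2*v+1)^4 + 12*(2*v+1) = 2 := by decide
      exact hv (u : ZMod 4)
    have hns : ∀ v : ZMod 4, v^2 ≠ 2 := by decide
    exact hns _ h4
  all_goals
  · have hU : (1 : ℝ) ≤ (u : ℝ) := by exact_mod_cast hu
    have hid : (((2*u+1)^10 + 6*(2*u+1)^7 + 15*(2*u+1)^4 + 12*(2*u+1) : ℕ) : ℝ)^3
        - (((2*u+1)^15 + 9*(2*u+1)^12 + 36*(2*u+1)^9 + 72*(2*u+1)^6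
            + 540*u^3 + 810*u^2 + 405*u + 81 : ℕ) : ℝ)^2
        = -(27/4 * (3*(2*(u:ℝ)+1)^6 + 14*(2*(u:ℝ)+1)^3 + 27)) := by
      push_cast
      ring
    have hpos : 0 < 27/4 * (3*(2*(u:ℝ)+1)^6 + 14*(2*(u:ℝ)+1)^3 + 27) := by positivity
    rw [hid, abs_neg, abs_of_pos hpos]
    · first
      | exact hpos
      | -- the bound
        have hx10 : (2*(u:ℝ)+1)^10
            ≤ (((2*u+1)^10 + 6*(2*u+1)^7 + 15*(2*u+1)^4 + 12*(2*u+1) : ℕ) : ℝ) := by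
          push_cast
          have h1 : (0:ℝ) ≤ 6*(2*(u:ℝ)+1)^7 + 15*(2*(u:ℝ)+1)^4 + 12*(2*(u:ℝ)+1) := by
            positivity
          linarith
        have hT6 : (2*(u:ℝ)+1)^6
            ≤ (((2*u+1)^10 + 6*(2*u+1)^7 + 15*(2*u+1)^4 + 12*(2*u+1) : ℕ) : ℝ) ^ ((3:ℝ)/5) := by
          have hkey : (2*(u:ℝ)+1)^6 = ((2*(u:ℝ)+1)^10) ^ ((3:ℝ)/5) := by
            rw [← Real.rpow_natCast (2*(u:ℝ)+1) 10, ← Real.rpow_mul (by positivity)]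
            rw [show ((10:ℕ):ℝ) * (3/5) = ((6:ℕ):ℝ) by norm_num, Real.rpow_natCast]
          rw [hkey]
          exact Real.rpow_le_rpow (by positivity) hx10 (by norm_num)
        have hU2 : (1:ℝ) ≤ (u:ℝ)^2 := one_le_pow₀ hU
        have hU3 : (1:ℝ) ≤ (u:ℝ)^3 := one_le_pow₀ hU
        have h3 : (27:ℝ) ≤ (2*(u:ℝ)+1)^3 := by nlinarith [hU, hU2, hU3]
        have hA6 : 27 * (2*(u:ℝ)+1)^3 ≤ (2*(u:ℝ)+1)^6 := by nlinarith
        have h729 : (729:ℝ) ≤ (2*(u:ℝ)+1)^6 := by nlinarith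
        linarith

theorem hall_three_fifths_bound :
    ∃ C : ℝ, 0 < C ∧ ∀ N : ℕ, ∃ x y : ℕ, N < x ∧ 0 < y ∧
      (¬ ∃ s : ℕ, s^2 = x) ∧
      0 < |(x : ℝ)^3 - (y : ℝ)^2| ∧
      |(x : ℝ)^3 - (y : ℝ)^2| < C * (x : ℝ) ^ ((3 : ℝ) / 5) := by
  refine ⟨297, by norm_num, fun N => ?_⟩
  obtain ⟨x, y, hx, hy, hns, h1, h2⟩ := hall_aux (N + 1) (by omega)
  exact ⟨x, y, by omega, hy, hns, h1, h2⟩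
end

section
/- Let a₀, b, α, C be integers with b ≥ 1, and suppose 2a₀^3 − 3α·a₀ + 2C ≡ 0 (mod d·b^2) where d = gcd(3(2a₀^2 − α), 2b). Then for an integer k, the element a = a₀ + k·b^2 satisfies 2a^3 − 3α·a + 2C ≡ 0 (mod 2b^3) if and only if 3(2a₀^2 − α)·k ≡ −(2a₀^3 − 3α·a₀ + 2C)/b^2 (mod 2b). -/
theorem hensel_lifting_step (a₀ b α C k : ℤ) (hb : 1 ≤ b)
    (hdiv : (Int.gcd (3*(2*a₀^2 - α)) (2*b) : ℤ) * b^2 ∣ (2*a₀^3 - 3*α*a₀ + 2*C)) :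
    ((2*b^3) ∣ (2*(a₀ + k*b^2)^3 - 3*α*(a₀ + k*b^2) + 2*C)) ↔
      (3*(2*a₀^2 - α)*k ≡ -((2*a₀^3 - 3*α*a₀ + 2*C) / b^2) [ZMOD 2*b]) := by
  have hb2 : (b^2 : ℤ) ∣ (2*a₀^3 - 3*α*a₀ + 2*C) :=
    dvd_trans (dvd_mul_left _ _) hdiv
  set m := (2*a₀^3 - 3*α*a₀ + 2*C) / b^2 with hm
  have key : b^2 * m = 2*a₀^3 - 3*α*a₀ + 2*C := Int.mul_ediv_cancel' hb2
  have hb2ne : (b^2 : ℤ) ≠ 0 := pow_ne_zero _ (by linarith)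
  have hexpr : 2*(a₀ + k*b^2)^3 - 3*α*(a₀ + k*b^2) + 2*C
      = b^2 * (m + 3*(2*a₀^2 - α)*k) + 2*b^3*(3*a₀*k^2*b + k^3*b^3) := by
    linear_combination -key
  rw [hexpr, Int.modEq_iff_dvd]
  have h1 : (2*b^3 : ℤ) ∣ b^2 * (m + 3*(2*a₀^2 - α)*k) + 2*b^3*(3*a₀*k^2*b + k^3*b^3)
      ↔ (2*b^3 : ℤ) ∣ b^2 * (m + 3*(2*a₀^2 - α)*k) :=
    dvd_add_left (Dvd.intro _ rfl)
  rw [h1]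
  have h2 : (2*b^3 : ℤ) = b^2 * (2*b) := by ring
  rw [h2, mul_dvd_mul_iff_left hb2ne]
  have h3 : (-m - 3*(2*a₀^2 - α)*k : ℤ) = -(m + 3*(2*a₀^2 - α)*k) := by ring
  rw [h3, dvd_neg]
end
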